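/- arXiv:2001.10347 — 3 statements merged into one kernel-verified Lean document; each statement's English description precedes it below -/
import Mathlib

section
/- Let A be an n×n complex matrix, let Q be an n×n complex matrix with Q² = Q, and let v be a vector in ℂⁿ with Qv = 0. Then for every complex scalar γ and every j ≥ 1, the Krylov subspaces satisfy K_j((I−Q)A, v) = K_j((I−Q)(A+γI), v). -/
open Matrix

/-- The Krylov subspace `K_j(M, v) = span {M^i v : 0 ≤ i ≤ j-1}`. -/
noncomputable def Krylov {n : ℕ} (M : Matrix (Fin n) (Fin n) ℂ) (v : Fin n → ℂ) (j : ℕ) :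
    Submodule ℂ (Fin n → ℂ) :=
  Submodule.span ℂ {x | ∃ i < j, x = (M ^ i).mulVec v}

lemma Krylov.mono {n : ℕ} (M : Matrix (Fin n) (Fin n) ℂ) (v : Fin n → ℂ) {j j' : ℕ}
    (h : j ≤ j') : Krylov M v j ≤ Krylov M v j' := by
  apply Submodule.span_mono
  rintro x ⟨i, hi, rfl⟩
  exact ⟨i, lt_of_lt_of_le hi h, rfl⟩

lemma Krylov.pow_mem {n : ℕ} (M : Matrix (Fin n) (Fin n) ℂ) (v : Fin n → ℂ) {i j : ℕ}
    (h : i < j) : (M ^ i).mulVec v ∈ Krylov M v j :=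
  Submodule.subset_span ⟨i, h, rfl⟩

lemma Krylov.map_le {n : ℕ} (M : Matrix (Fin n) (Fin n) ℂ) (v : Fin n → ℂ) (j : ℕ)
    {x : Fin n → ℂ} (hx : x ∈ Krylov M v j) : M.mulVec x ∈ Krylov M v (j + 1) := by
  have : M.mulVecLin x ∈ Submodule.map M.mulVecLin (Krylov M v j) :=
    Submodule.mem_map_of_mem hx
  rw [Krylov, Submodule.map_span] at this
  refine Submodule.span_le.2 ?_ this
  rintro y ⟨z, ⟨i, hi, rfl⟩, rfl⟩
  have : M.mulVecLin ((M ^ i).mulVec v) = (M ^ (i + 1)).mulVec v := by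
    simp [Matrix.mulVecLin_apply, pow_succ', Matrix.mulVec_mulVec]
  rw [this]
  exact Krylov.pow_mem _ _ (by omega)

/-- Generic one-sided inclusion: if `C` acts on the `C`-Krylov vectors as `B` plus a scalar,
then the `C`-Krylov space is contained in the `B`-Krylov space. -/
lemma Krylov.le_of_shift {n : ℕ} (B C : Matrix (Fin n) (Fin n) ℂ) (v : Fin n → ℂ) (γ : ℂ)
    (h : ∀ i : ℕ, C.mulVec ((C ^ i).mulVec v)
        = B.mulVec ((C ^ i).mulVec v) + γ • ((C ^ i).mulVec v)) (j : ℕ) :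
    Krylov C v j ≤ Krylov B v j := by
  have key : ∀ i : ℕ, (C ^ i).mulVec v ∈ Krylov B v (i + 1) := by
    intro i
    induction i with
    | zero => simpa using Krylov.pow_mem B v (show 0 < 1 by omega) (i := 0)
    | succ i ih =>
      have hstep : (C ^ (i + 1)).mulVec v
          = B.mulVec ((C ^ i).mulVec v) + γ • ((C ^ i).mulVec v) := by
        rw [← h i, pow_succ', Matrix.mulVec_mulVec]
      rw [hstep]
      exact Submodule.add_mem _ (Krylov.map_le B v (i + 1) ih)
        (Submodule.smul_mem _ _ (Krylov.mono B v (by omega) ih))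
  apply Submodule.span_le.2
  rintro x ⟨i, hi, rfl⟩
  exact Krylov.mono B v (by omega) (key i)

/-- If `Q` is a projector (`Q² = Q`) and `Qv = 0`, then the Krylov subspaces generated by the
projected operator `(I - Q)A` from seed `v` are invariant under scalar identity shifts of `A`. -/
theorem shifted_projected_krylov_invariance {n : ℕ}
    (A Q : Matrix (Fin n) (Fin n) ℂ) (hQ : Q * Q = Q)
    (v : Fin n → ℂ) (hv : Q.mulVec v = 0) (γ : ℂ) (j : ℕ) (hj : 1 ≤ j) :
    Krylov ((1 - Q) * A) v j
      = Krylov ((1 - Q) * (A + γ • (1 : Matrix (Fin n) (Fin n) ℂ))) v j := by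
  set P : Matrix (Fin n) (Fin n) ℂ := 1 - Q with hP
  set B : Matrix (Fin n) (Fin n) ℂ := P * A with hB
  set C : Matrix (Fin n) (Fin n) ℂ := P * (A + γ • 1) with hC
  have hPP : P * P = P := by
    simp [hP, mul_sub, sub_mul, hQ]
  have hPv : P.mulVec v = v := by
    simp [hP, Matrix.sub_mulVec, hv]
  have hPB : P * B = B := by rw [hB, ← mul_assoc, hPP]
  have hPC : P * C = C := by rw [hC, ← mul_assoc, hPP]
  have hCB : C = B + γ • P := by
    rw [hC, hB, mul_add]
    congr 1
    simp [Matrix.mul_smul]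
  have fixB : ∀ i : ℕ, P.mulVec ((B ^ i).mulVec v) = (B ^ i).mulVec v := by
    intro i
    cases i with
    | zero => simpa using hPv
    | succ i =>
      rw [pow_succ', Matrix.mulVec_mulVec, ← mul_assoc, hPB]
  have fixC : ∀ i : ℕ, P.mulVec ((C ^ i).mulVec v) = (C ^ i).mulVec v := by
    intro i
    cases i with
    | zero => simpa using hPv
    | succ i =>
      rw [pow_succ', Matrix.mulVec_mulVec, ← mul_assoc, hPC]
  apply le_antisymm
  · refine Krylov.le_of_shift C B v (-γ) ?_ j
    intro i
    have : B.mulVec ((B ^ i).mulVec v)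
        = C.mulVec ((B ^ i).mulVec v) - γ • P.mulVec ((B ^ i).mulVec v) := by
      rw [hCB, Matrix.add_mulVec, Matrix.smul_mulVec]
      abel
    rw [this, fixB i, neg_smul]
    abel
  · refine Krylov.le_of_shift B C v γ ?_ j
    intro i
    nth_rewrite 1 [hCB]
    rw [Matrix.add_mulVec, Matrix.smul_mulVec, fixC i]
end

section
/- Let A ∈ ℂ^{n×n}, U, Ũ ∈ ℂ^{n×k} with Ũ*AU invertible, P = U(Ũ*AU)^{-1}Ũ*A and Q = AU(Ũ*AU)^{-1}Ũ*. Let b, x₀ ∈ ℂⁿ, r₀ = b − Ax₀, and let t ∈ ℂⁿ satisfy At = r₀. Then for any t_j ∈ ℂⁿ, the approximation x_j = x₀ + Pt + (I−P)t_j has residual b − Ax_j = (I−Q)(r₀ − A t_j); that is, the residual of the full problem equals the residual of the projected problem (I−Q)A t̂ = (I−Q)r₀ at the approximation t_j. -/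
open Matrix

/-- The residual of the full problem equals the residual of the projected problem:
for `x_j = x₀ + Pt + (I-P)t_j` one has `b - Ax_j = (I-Q)(r₀ - At_j)`. -/
theorem full_residual_eq_projected_residual {n k : ℕ} (A : Matrix (Fin n) (Fin n) ℂ)
    (U Ut : Matrix (Fin n) (Fin k) ℂ) (h : IsUnit (Utᴴ * A * U))
    (P Q : Matrix (Fin n) (Fin n) ℂ)
    (hP : P = U * (Utᴴ * A * U)⁻¹ * (Utᴴ * A))
    (hQ : Q = A * U * (Utᴴ * A * U)⁻¹ * Utᴴ)
    (b x₀ r₀ t : Fin n → ℂ) (hr₀ : r₀ = b - A.mulVec x₀) (ht : A.mulVec t = r₀)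
    (tj : Fin n → ℂ) (xj : Fin n → ℂ)
    (hxj : xj = x₀ + P.mulVec t + (1 - P).mulVec tj) :
    b - A.mulVec xj = (1 - Q).mulVec (r₀ - A.mulVec tj) := by
  have key : A * P = Q * A := by rw [hP, hQ]; simp [Matrix.mul_assoc]
  have h1 : A.mulVec (P.mulVec t) = Q.mulVec r₀ := by
    rw [mulVec_mulVec, key, ← mulVec_mulVec, ht]
  subst hxj
  rw [hr₀] at h1 ⊢
  simp only [mulVec_add, sub_mulVec, one_mulVec, Matrix.mulVec_sub, h1, mulVec_mulVec, key,
    Matrix.sub_mul, Matrix.one_mul]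
  abel
end

section
/- Let A ∈ ℂ^{n×n}, let U, Ũ ∈ ℂ^{n×k} with Ũ*AU invertible and U of full column rank, let V_j, Ṽ_j ∈ ℂ^{n×j}, and let b, x₀ ∈ ℂⁿ with r₀ = b − Ax₀. Set Q = AU(Ũ*AU)^{-1}Ũ*. Then vectors s_j = Uz (z ∈ ℂᵏ) and t_j = V_j y_j (y_j ∈ ℂʲ) satisfy the augmented Petrov–Galerkin condition Ũ*(b − A(x₀ + s_j + t_j)) = 0 and Ṽ_j*(b − A(x₀ + s_j + t_j)) = 0 if and only if Ṽ_j*((I−Q)(r₀ − A V_j y_j)) = 0 and s_j = U(Ũ*AU)^{-1}Ũ*(r₀ − A V_j y_j); in that case the full residual equals the projected residual, b − A(x₀ + s_j + t_j) = (I−Q)(r₀ − A V_j y_j). -/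
open Matrix

/-- The general residual-constraint framework: corrections `s_j = Uz`, `t_j = V_j y_j` satisfy
the augmented Petrov–Galerkin condition iff `t_j` solves the constrained projected problem and
`s_j` is given by the closed formula; in that case the full residual equals the projected
residual. -/
theorem augmented_petrov_galerkin_framework {n k j : ℕ} (A : Matrix (Fin n) (Fin n) ℂ)
    (U Ut : Matrix (Fin n) (Fin k) ℂ) (h : IsUnit (Utᴴ * A * U))
    (hU : Function.Injective U.mulVec)
    (V Vt : Matrix (Fin n) (Fin j) ℂ)
    (b x₀ r₀ : Fin n → ℂ) (hr₀ : r₀ = b - A.mulVec x₀)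
    (Q : Matrix (Fin n) (Fin n) ℂ)
    (hQ : Q = A * U * (Utᴴ * A * U)⁻¹ * Utᴴ)
    (z : Fin k → ℂ) (yj : Fin j → ℂ) (sj tj : Fin n → ℂ)
    (hs : sj = U.mulVec z) (ht : tj = V.mulVec yj) :
    ((Utᴴ.mulVec (b - A.mulVec (x₀ + sj + tj)) = 0 ∧
        Vtᴴ.mulVec (b - A.mulVec (x₀ + sj + tj)) = 0) ↔
      (Vtᴴ.mulVec ((1 - Q).mulVec (r₀ - A.mulVec (V.mulVec yj))) = 0 ∧
        sj = (U * (Utᴴ * A * U)⁻¹ * Utᴴ).mulVec (r₀ - A.mulVec (V.mulVec yj)))) ∧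
    ((Utᴴ.mulVec (b - A.mulVec (x₀ + sj + tj)) = 0 ∧
        Vtᴴ.mulVec (b - A.mulVec (x₀ + sj + tj)) = 0) →
      b - A.mulVec (x₀ + sj + tj) = (1 - Q).mulVec (r₀ - A.mulVec (V.mulVec yj))) := by
  set M := Utᴴ * A * U with hM
  have hdet : IsUnit M.det := (Matrix.isUnit_iff_isUnit_det M).mp h
  have hMinv : M⁻¹ * M = 1 := Matrix.nonsing_inv_mul M hdet
  have hMinv' : M * M⁻¹ = 1 := Matrix.mul_nonsing_inv M hdet
  set w := r₀ - A.mulVec (V.mulVec yj) with hw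
  -- residual identity
  have hres : b - A.mulVec (x₀ + sj + tj) = w - (A * U).mulVec z := by
    subst hr₀ hs ht
    simp [hw, Matrix.mulVec_add, Matrix.mulVec_mulVec]
    abel
  -- (1-Q) w in explicit form
  have hQw : (1 - Q).mulVec w = w - (A * U).mulVec (M⁻¹.mulVec (Utᴴ.mulVec w)) := by
    rw [hQ, Matrix.sub_mulVec, Matrix.one_mulVec]
    congr 1
    simp [Matrix.mulVec_mulVec, Matrix.mul_assoc]
  -- key: Utᴴ res = 0 ↔ M z = Utᴴ w
  have hUtres : ∀ v : Fin k → ℂ, Utᴴ.mulVec (w - (A * U).mulVec v) =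
      Utᴴ.mulVec w - M.mulVec v := by
    intro v
    rw [Matrix.mulVec_sub, Matrix.mulVec_mulVec, hM, Matrix.mul_assoc]
  constructor
  · constructor
    · rintro ⟨h1, h2⟩
      have h1' : M.mulVec z = Utᴴ.mulVec w := by
        have := h1
        rw [hres, hUtres, sub_eq_zero] at this
        exact this.symm
      have hz : z = M⁻¹.mulVec (Utᴴ.mulVec w) := by
        rw [← h1', Matrix.mulVec_mulVec, hMinv, Matrix.one_mulVec]
      have hres2 : b - A.mulVec (x₀ + sj + tj) = (1 - Q).mulVec w := by
        rw [hres, hQw, ← hz]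
      constructor
      · rw [← hres2]; exact h2
      · rw [hs, hz]
        simp [Matrix.mulVec_mulVec, Matrix.mul_assoc]
    · rintro ⟨h1, h2⟩
      have hz : z = M⁻¹.mulVec (Utᴴ.mulVec w) := by
        apply hU
        rw [← hs, h2]
        simp [Matrix.mulVec_mulVec, Matrix.mul_assoc]
      have hres2 : b - A.mulVec (x₀ + sj + tj) = (1 - Q).mulVec w := by
        rw [hres, hQw, ← hz]
      refine ⟨?_, by rw [hres2]; exact h1⟩
      rw [hres, hUtres, hz, Matrix.mulVec_mulVec, hMinv', Matrix.one_mulVec, sub_self]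
  · rintro ⟨h1, h2⟩
    have h1' : M.mulVec z = Utᴴ.mulVec w := by
      have := h1
      rw [hres, hUtres, sub_eq_zero] at this
      exact this.symm
    have hz : z = M⁻¹.mulVec (Utᴴ.mulVec w) := by
      rw [← h1', Matrix.mulVec_mulVec, hMinv, Matrix.one_mulVec]
    rw [hres, hQw, ← hz]
end
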